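/- arXiv:1611.07170 — 2 statements merged into one kernel-verified Lean document; each statement's English description precedes it below -/
import Mathlib

section
/- A pencil B(λ) ∈ F[λ]^{(q+1)n×(p+1)n}, viewed as a (q+1)×(p+1) block-pencil with n×n blocks, satisfies B(λ)(Λ_p(λ)^T ⊗ I_n) = 0 if and only if there exist matrices B_{ij} ∈ F^{n×n} (i = 1,...,q+1, j = 1,...,p) such that the first block-column of B(λ) is [B_{i1}]_i, the j-th block-column for 2 ≤ j ≤ p is [−λ B_{i,j−1} + B_{ij}]_i, and the last block-column is [−λ B_{ip}]_i. -/
open Polynomial Matrix Kronecker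

/-- The row vector `Λ_p(λ) = [λ^p, λ^{p-1}, ..., λ, 1]`. -/
noncomputable def LamPoly (F : Type*) [Field F] (p : ℕ) :
    Matrix (Fin 1) (Fin (p+1)) (Polynomial F) :=
  Matrix.of fun _ j => X ^ (p - (j : ℕ))

/-!
Write an entry of a row of the pencil as `f_j = a_j + λ b_j`. Then
`∑_j f_j λ^{p-j}` has coefficients `b_0` (at `λ^{p+1}`), `a_{j-1} + b_j` (at `λ^{p+1-j}`)
and `a_p` (at `1`). So the product vanishes exactly when `b_0 = a_p = 0` and `b_j = -a_{j-1}`,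
i.e. when the row is `[c_0, c_1 - λ c_0, …, c_{p-1} - λ c_{p-2}, -λ c_{p-1}]` with `c_j = a_j`;
conversely, the sum over such a row telescopes to zero.
-/

namespace Polynomial

section Semiring

variable {R : Type*} [Semiring R] {p : ℕ}

theorem coeff_sum_C_mul_X_pow_sub (e : Fin (p + 1) → R) {j : Fin (p + 1)} {k : ℕ}
    (hjk : (j : ℕ) + k = p) : (∑ i, C (e i) * X ^ (p - i)).coeff k = e j := by
  rw [finsetSum_coeff, Finset.sum_eq_single j]
  · rw [coeff_C_mul_X_pow, if_pos (by omega)]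
  · intro i _ hij
    rw [coeff_C_mul_X_pow, if_neg]
    omega
  · simp

theorem coeff_sum_C_mul_X_pow_sub_of_lt (e : Fin (p + 1) → R) {k : ℕ} (hk : p < k) :
    (∑ i, C (e i) * X ^ (p - i)).coeff k = 0 := by
  rw [finsetSum_coeff]
  exact Finset.sum_eq_zero fun i _ => by rw [coeff_C_mul_X_pow, if_neg (by omega)]

end Semiring

section Ring

variable {R : Type*} [Ring R] {p : ℕ}

/-- The row `[C c₀, C c₁ - X * C c₀, …, C c_{p-1} - X * C c_{p-2}, -X * C c_{p-1}]`. -/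
noncomputable def wingRow (c : Fin p → R) : Fin (p + 1) → R[X] :=
  Fin.snoc (fun j => C (c j)) 0 - Fin.cons 0 (fun j => X * C (c j))

theorem wingRow_apply (c : Fin p → R) (j : Fin (p + 1)) :
    wingRow c j = (if h : (j : ℕ) < p then C (c ⟨j, h⟩) else 0) -
      (if h : 0 < (j : ℕ) then
        X * C (c ⟨(j : ℕ) - 1, Nat.sub_one_lt_of_le h (Nat.le_of_lt_succ j.isLt)⟩)
      else 0) := by
  simp only [wingRow, Pi.sub_apply]
  congr 1
  cases j using Fin.cases <;>
    simp only [Fin.cons_zero, Fin.cons_succ, Fin.val_zero, Fin.val_succ] <;> simp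

theorem sum_wingRow_mul_X_pow (c : Fin p → R) :
    ∑ j, wingRow c j * X ^ (p - j) = 0 := by
  simp only [wingRow, Pi.sub_apply, sub_mul, Finset.sum_sub_distrib, sub_eq_zero]
  rw [Fin.sum_univ_castSucc, Fin.sum_univ_succ]
  simp only [Fin.snoc_castSucc, Fin.snoc_last, Fin.cons_zero, Fin.cons_succ, zero_mul,
    add_zero, zero_add, Fin.val_castSucc, Fin.val_succ]
  refine Finset.sum_congr rfl fun j _ => ?_
  rw [X_mul_C, mul_assoc, ← pow_succ']
  congr 2
  omega

theorem eq_wingRow_of_sum_mul_X_pow_eq_zero {f : Fin (p + 1) → R[X]}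
    (hf : ∀ j, (f j).natDegree ≤ 1) (hS : ∑ j, f j * X ^ (p - j) = 0) :
    f = wingRow fun j => (f j.castSucc).coeff 0 := by
  set a : Fin (p + 1) → R := fun j => (f j).coeff 0
  set b : Fin (p + 1) → R := fun j => (f j).coeff 1
  have hab : f = (fun j => C (a j)) + fun j => X * C (b j) := by
    funext j
    rw [Pi.add_apply, X_mul_C, add_comm]
    exact eq_X_add_C_of_natDegree_le_one (hf j)
  have hAB : ∑ j, C (a j) * X ^ (p - j) + X * ∑ j, C (b j) * X ^ (p - j) = 0 := by
    rw [← hS, hab]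
    simp only [Pi.add_apply, add_mul, Finset.sum_add_distrib, Finset.mul_sum, mul_assoc]
  have hlast : a (Fin.last p) = 0 := by
    have h := congrArg (coeff · 0) hAB
    simpa [coeff_sum_C_mul_X_pow_sub a (j := Fin.last p) (k := 0) (by simp)] using h
  have hfirst : b 0 = 0 := by
    have h := congrArg (coeff · (p + 1)) hAB
    simpa [coeff_X_mul, coeff_sum_C_mul_X_pow_sub b (j := 0) (k := p) (by simp),
      coeff_sum_C_mul_X_pow_sub_of_lt a (Nat.lt_succ_self p)] using h
  have hmid : ∀ j : Fin p, b j.succ = -a j.castSucc := fun j => by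
    have h := congrArg (coeff · (p - (j + 1) + 1)) hAB
    simp only [coeff_add, coeff_X_mul, coeff_zero] at h
    rw [coeff_sum_C_mul_X_pow_sub a (j := j.castSucc) (by rw [Fin.val_castSucc]; omega),
      coeff_sum_C_mul_X_pow_sub b (j := j.succ) (by rw [Fin.val_succ]; omega)] at h
    exact eq_neg_of_add_eq_zero_right h
  have hconst : (fun j => C (a j)) = Fin.snoc (fun j => C (a j.castSucc)) 0 := by
    funext j
    cases j using Fin.lastCases <;> simp [hlast]
  have hlin : (fun j => X * C (b j)) = -Fin.cons 0 (fun j => X * C (a j.castSucc)) := by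
    funext j
    cases j using Fin.cases <;> simp [hfirst, hmid]
  calc f = (fun j => C (a j)) + fun j => X * C (b j) := hab
    _ = wingRow fun j => a j.castSucc := by rw [hconst, hlin, ← sub_eq_add_neg]; rfl

end Ring

end Polynomial

theorem mul_transpose_LamPoly_kronecker_one_apply {F : Type*} [Field F] {m ν : Type*}
    [Fintype ν] [DecidableEq ν] {p : ℕ} (B : Matrix m (Fin (p + 1) × ν) F[X]) (i : m)
    (k : Fin 1) (b : ν) :
    (B * ((LamPoly F p)ᵀ ⊗ₖ (1 : Matrix ν ν F[X]))) i (k, b) =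
      ∑ j, B i (j, b) * X ^ (p - j) := by
  simp [mul_apply, Fintype.sum_prod_type, LamPoly, one_apply]

/-- A pencil `B(λ) ∈ F[λ]^{(q+1)n×(p+1)n}` satisfies `B(λ)(Λ_p(λ)ᵀ ⊗ Iₙ) = 0` if and
only if there exist `n×n` matrices `B_{ij}` (`i = 1,...,q+1`, `j = 1,...,p`) such that
the first block-column of `B(λ)` is `[B_{i1}]`, the `j`-th block-column (`2 ≤ j ≤ p`)
is `[-λ B_{i,j-1} + B_{ij}]`, and the last block-column is `[-λ B_{ip}]`. -/
theorem generalized_wing_pencil_structure (F : Type*) [Field F] (n p q : ℕ)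
    (B : Matrix (Fin (q+1) × Fin n) (Fin (p+1) × Fin n) (Polynomial F))
    (hpencil : ∀ r c, (B r c).natDegree ≤ 1) :
    B * ((LamPoly F p)ᵀ ⊗ₖ (1 : Matrix (Fin n) (Fin n) (Polynomial F))) = 0 ↔
    ∃ Bm : Fin (q+1) → Fin p → Matrix (Fin n) (Fin n) F,
      ∀ (i : Fin (q+1)) (a : Fin n) (j : Fin (p+1)) (b : Fin n),
        B (i, a) (j, b) =
          (if h : (j : ℕ) < p then Polynomial.C (Bm i ⟨j, h⟩ a b) else 0) -
          (if h : 0 < (j : ℕ) then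
            Polynomial.X * Polynomial.C (Bm i ⟨(j : ℕ) - 1, by omega⟩ a b) else 0) := by
  constructor
  · intro h
    refine ⟨fun i j a b => (B (i, a) (j.castSucc, b)).coeff 0, fun i a j b => ?_⟩
    have hrow := eq_wingRow_of_sum_mul_X_pow_eq_zero (fun j => hpencil (i, a) (j, b))
      (by rw [← mul_transpose_LamPoly_kronecker_one_apply B (i, a) 0 b, h, Matrix.zero_apply])
    rw [congrFun hrow j, wingRow_apply]
  · rintro ⟨Bm, hB⟩
    ext ⟨i, a⟩ ⟨k, b⟩ : 1
    rw [mul_transpose_LamPoly_kronecker_one_apply, Matrix.zero_apply]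
    convert sum_wingRow_mul_X_pow (fun j => Bm i j a b) using 3 with j
    rw [hB, wingRow_apply]
end

section
/- Let P(λ) = Σ_{i=0}^k A_i λ^i ∈ F[λ]^{n×n}, p+q+1 = k, and let M(λ) ∈ F[λ]^{(q+1)n×(p+1)n} be a pencil satisfying the AS condition for P(λ). If B(λ) ∈ F[λ]^{(q+1)n×(p+1)n} is a pencil with B(λ)(Λ_p(λ)^T ⊗ I_n) = 0, then M(λ) + B(λ) also satisfies the AS condition for P(λ). -/
open Polynomial Matrix Kronecker

/-- The antidiagonal sum `AS(M,s)` (entrywise) of a block pencil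
`M(λ) ∈ F[λ]^{(q+1)n×(p+1)n}`, viewed with `n×n` blocks, relative to `k = p+q+1`. -/
noncomputable def ASentry {F : Type*} [Field F] {n p q : ℕ}
    (M : Matrix (Fin (q+1) × Fin n) (Fin (p+1) × Fin n) (Polynomial F))
    (s : ℕ) (a b : Fin n) : F :=
  ∑ i : Fin (q+1), ∑ j : Fin (p+1),
    ((if (i : ℕ) + (j : ℕ) + s = p + q + 1 then (M (i, a) (j, b)).coeff 1 else 0) +
      (if (i : ℕ) + (j : ℕ) + s + 1 = p + q + 1 then (M (i, a) (j, b)).coeff 0 else 0))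

/-- If the pencil `M(λ)` satisfies the AS condition for `P(λ) = Σ A_i λ^i` and `B(λ)` is
a pencil with `B(λ)(Λ_p(λ)ᵀ ⊗ Iₙ) = 0` (a generalized wing pencil), then `M(λ) + B(λ)`
also satisfies the AS condition for `P(λ)`. -/
theorem AS_condition_add_generalized_wing (F : Type*) [Field F] (n p q : ℕ)
    (A : Fin (p+q+2) → Matrix (Fin n) (Fin n) F)
    (M B : Matrix (Fin (q+1) × Fin n) (Fin (p+1) × Fin n) (Polynomial F))
    (hM : ∀ r c, (M r c).natDegree ≤ 1) (hB : ∀ r c, (B r c).natDegree ≤ 1)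
    (hwing : B * ((LamPoly F p)ᵀ ⊗ₖ (1 : Matrix (Fin n) (Fin n) (Polynomial F))) = 0)
    (hAS : ∀ (s : Fin (p+q+2)) (a b : Fin n), ASentry M (s : ℕ) a b = A s a b) :
    ∀ (s : Fin (p+q+2)) (a b : Fin n), ASentry (M + B) (s : ℕ) a b = A s a b := by
  -- rows of B annihilated by Λ
  have hrow : ∀ (r : Fin (q+1) × Fin n) (b : Fin n),
      ∑ j : Fin (p+1), B r (j, b) * X ^ (p - (j : ℕ)) = 0 := by
    intro r b
    have h := congrFun (congrFun hwing r) ((0 : Fin 1), b)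
    simpa [Matrix.mul_apply, Fintype.sum_prod_type, kroneckerMap_apply, LamPoly,
      Matrix.one_apply, mul_ite, mul_zero, mul_one, Finset.sum_ite_eq] using h
  have hASB : ∀ (s : ℕ) (a b : Fin n), ASentry B s a b = 0 := by
    intro s a b
    unfold ASentry
    rw [Finset.sum_eq_zero]
    intro i _
    by_cases hq : (i : ℕ) + s < q
    · apply Finset.sum_eq_zero
      intro j _
      have hj : (j : ℕ) ≤ p := Nat.lt_succ_iff.mp j.isLt
      rw [if_neg (by omega), if_neg (by omega), add_zero]
    · push_neg at hq
      set m : ℕ := (i : ℕ) + s - q with hm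
      have hz : (∑ j : Fin (p+1), B (i, a) (j, b) * X ^ (p - (j : ℕ))).coeff m = 0 := by
        rw [hrow (i, a) b]; simp
      rw [finset_sum_coeff] at hz
      refine Eq.trans (Finset.sum_congr rfl ?_) hz
      intro j _
      have hj : (j : ℕ) ≤ p := Nat.lt_succ_iff.mp j.isLt
      have hi : (i : ℕ) ≤ q := Nat.lt_succ_iff.mp i.isLt
      rw [coeff_mul_X_pow']
      by_cases h1 : (i : ℕ) + (j : ℕ) + s = p + q + 1
      · rw [if_pos h1, if_neg (by omega), add_zero, if_pos (by omega)]
        congr 1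
        omega
      · rw [if_neg h1]
        by_cases h0 : (i : ℕ) + (j : ℕ) + s + 1 = p + q + 1
        · rw [if_pos h0, zero_add, if_pos (by omega)]
          congr 1
          omega
        · rw [if_neg h0, add_zero]
          by_cases hle : p - (j : ℕ) ≤ m
          · rw [if_pos hle]
            have : 1 < m - (p - (j : ℕ)) := by omega
            exact (coeff_eq_zero_of_natDegree_lt (lt_of_le_of_lt (hB (i, a) (j, b)) this)).symm
          · rw [if_neg hle]
  intro s a b
  have hadd : ASentry (M + B) (s : ℕ) a b = ASentry M (s : ℕ) a b + ASentry B (s : ℕ) a b := by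
    unfold ASentry
    rw [← Finset.sum_add_distrib]
    apply Finset.sum_congr rfl
    intro i _
    rw [← Finset.sum_add_distrib]
    apply Finset.sum_congr rfl
    intro j _
    simp only [Matrix.add_apply, coeff_add, apply_ite₂]
    split <;> split <;> ring
  rw [hadd, hASB, add_zero, hAS]
end
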